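/- arXiv:1608.03310 — 3 statements merged into one kernel-verified Lean document; each statement's English description precedes it below -/
import Mathlib

section
/- Let ξ be a real-valued random variable and C₂ > 0, m > 0, r ∈ ℝ constants. If max(P(ξ > x), P(ξ < −x)) ≤ exp(−C₂ · x^m · (ln x)^{−m·r}) for all x > e, then there exists C₁ = C₁(C₂, m, r) < ∞ such that (E|ξ|^p)^{1/p} ≤ C₁ · p^{1/m} · (ln p)^r for all p ≥ 2. -/
/-!
Put `A = K p^{1/m} (log p)^r`. It suffices to find `K = K(C₂, m, r)` such that
`2 p (1 + log (x / A)) ≤ C₂ x^m (log x)^{-mr}` for all `p ≥ 2` and `x ≥ A`: the tail hypothesis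
then gives `P(|ξ| > x) ≤ (A / x)^{2p}` for `x > A`, hence
`E|ξ|^p ≤ A^p + ∫_{A^p}^∞ (A^p / t)^2 dt = 2 A^p`.
Writing `x = A e^u`, the inequality reads `2 (1 + u) ≤ C₂ K^m e^{mu} (log p / log x)^{mr}`.
For `r ≤ 0` it follows from `log x ≥ log A ≥ log p / (2m)`. For `r > 0` one has
`log x ≤ B log p (1 + log K + u)` with `B` depending only on `m, r`, and the resulting factor
`(1 + log K + u)^{-mr}` is absorbed by `e^{mu/2}` and half of `K^m`.
-/

open MeasureTheory Real Set Filter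

noncomputable def mom {Ω : Type*} [MeasurableSpace Ω] (μ : Measure Ω) (ζ : Ω → ℝ) (p : ℝ) : ℝ :=
  (∫ ω, |ζ ω| ^ p ∂μ) ^ (1 / p)

noncomputable def tail {Ω : Type*} [MeasurableSpace Ω] (μ : Measure Ω) (ζ : Ω → ℝ) (y : ℝ) : ℝ :=
  max (μ {ω | ζ ω > y}).toReal (μ {ω | ζ ω < -y}).toReal

lemma one_add_rpow_le_mul_exp {q c w : ℝ} (hq : 0 < q) (hc : 0 < c) (hw : 0 ≤ w) :
    (1 + w) ^ q ≤ max 1 (q / c) ^ q * exp (c * w) := by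
  have hlin : 1 + w ≤ max 1 (q / c) * (1 + c / q * w) := by
    have h1 : 1 ≤ max 1 (q / c) := le_max_left _ _
    have h2 : 1 ≤ max 1 (q / c) * (c / q) :=
      calc (1 : ℝ) = q / c * (c / q) := by field_simp
        _ ≤ _ := by gcongr; exact le_max_right _ _
    nlinarith [mul_nonneg (sub_nonneg.2 h2) hw]
  calc (1 + w) ^ q ≤ (max 1 (q / c) * (1 + c / q * w)) ^ q := by gcongr
    _ = max 1 (q / c) ^ q * (1 + c / q * w) ^ q := mul_rpow (by positivity) (by positivity)
    _ ≤ max 1 (q / c) ^ q * exp (c / q * w) ^ q := by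
        gcongr; linarith [add_one_le_exp (c / q * w)]
    _ = max 1 (q / c) ^ q * exp (c * w) := by
        rw [← exp_mul]; congr 2; field_simp

lemma two_mul_exp_neg_le_div_rpow {p A x : ℝ} (hp : 1 ≤ p) (hA : 0 < A) (hx : 0 < x) :
    2 * exp (-(2 * p * (1 + log (x / A)))) ≤ (A / x) ^ (2 * p) := by
  have hlog : log (A / x) = -log (x / A) := by rw [← log_inv, inv_div]
  have htwo : 2 * exp (-(2 * p)) ≤ 1 := by
    rw [exp_neg, ← div_eq_mul_inv, div_le_one (exp_pos _)]
    linarith [add_one_le_exp (2 * p)]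
  calc 2 * exp (-(2 * p * (1 + log (x / A))))
      = 2 * exp (-(2 * p)) * exp (log (A / x) * (2 * p)) := by
        rw [hlog, mul_assoc 2 (exp _), ← exp_add]; ring_nf
    _ ≤ 1 * exp (log (A / x) * (2 * p)) := by gcongr
    _ = (A / x) ^ (2 * p) := by rw [one_mul, rpow_def_of_pos (div_pos hA hx)]

lemma lintegral_Ioi_div_sq {a : ℝ} (ha : 0 < a) :
    ∫⁻ t in Ioi a, ENNReal.ofReal ((a / t) ^ 2) = ENNReal.ofReal a := by
  have hrpow : EqOn (fun t : ℝ => ENNReal.ofReal ((a / t) ^ 2))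
      (fun t => ENNReal.ofReal (a ^ 2 * t ^ (-2 : ℝ))) (Ioi a) := fun t (ht : a < t) => by
    have ht0 : 0 < t := ha.trans ht
    beta_reduce
    rw [rpow_neg ht0.le, rpow_two, div_pow, div_eq_mul_inv]
  rw [setLIntegral_congr_fun measurableSet_Ioi hrpow, ← ofReal_integral_eq_lintegral_ofReal
    ((integrableOn_Ioi_rpow_of_lt (by norm_num) ha).const_mul _)
    (ae_restrict_of_forall_mem measurableSet_Ioi fun t (ht : a < t) => by
      have := ha.trans ht; positivity),
    integral_const_mul, integral_Ioi_rpow_of_lt (by norm_num) ha,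
    show (-2 : ℝ) + 1 = -1 by norm_num, rpow_neg_one]
  congr 1
  field_simp

lemma le_rpow_mul_rpow_neg_of_nonpos {m r L ℓ : ℝ} (hm : 0 < m) (hr : r ≤ 0) (hL : 0 < L)
    (hℓ : L / (2 * m) ≤ ℓ) : (2 * m) ^ (m * r) ≤ L ^ (m * r) * ℓ ^ (-(m * r)) := by
  have hmr : 0 ≤ -(m * r) := by nlinarith
  calc (2 * m) ^ (m * r) = L ^ (m * r) * (L / (2 * m)) ^ (-(m * r)) := by
        rw [div_rpow hL.le (by positivity), rpow_neg hL.le, rpow_neg (by positivity)]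
        field_simp
    _ ≤ L ^ (m * r) * ℓ ^ (-(m * r)) := by gcongr

section
variable {Ω : Type*} [MeasurableSpace Ω] {μ : Measure Ω}

lemma integral_le_two_mul_of_meas_lt_le [IsProbabilityMeasure μ] {f : Ω → ℝ}
    (hf : ∀ ω, 0 ≤ f ω) {a : ℝ} (ha : 0 < a)
    (h : ∀ t, a < t → μ {ω | t < f ω} ≤ ENNReal.ofReal ((a / t) ^ 2)) :
    ∫ ω, f ω ∂μ ≤ 2 * a := by
  by_cases hint : Integrable f μ
  swap
  · rw [integral_undef hint]; positivity
  have hlow : ∫⁻ t in Ioc 0 a, μ {ω | t < f ω} ≤ ENNReal.ofReal a := by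
    calc ∫⁻ t in Ioc 0 a, μ {ω | t < f ω} ≤ ∫⁻ _ in Ioc 0 a, 1 :=
          lintegral_mono fun _ => prob_le_one
      _ = ENNReal.ofReal a := by simp
  have hhigh : ∫⁻ t in Ioi a, μ {ω | t < f ω} ≤ ENNReal.ofReal a := by
    calc ∫⁻ t in Ioi a, μ {ω | t < f ω} ≤ ∫⁻ t in Ioi a, ENNReal.ofReal ((a / t) ^ 2) :=
          setLIntegral_mono' measurableSet_Ioi h
      _ = ENNReal.ofReal a := lintegral_Ioi_div_sq ha
  rw [integral_eq_lintegral_of_nonneg_ae (ae_of_all _ hf) hint.1]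
  refine ENNReal.toReal_le_of_le_ofReal (by positivity) ?_
  rw [lintegral_eq_lintegral_meas_lt μ (ae_of_all _ hf) hint.1.aemeasurable,
    ← Ioc_union_Ioi_eq_Ioi ha.le, lintegral_union measurableSet_Ioi Ioc_disjoint_Ioi_same,
    two_mul, ENNReal.ofReal_add ha.le ha.le]
  exact add_le_add hlow hhigh

lemma meas_lt_abs_le_two_mul_tail [IsFiniteMeasure μ] (ξ : Ω → ℝ) (x : ℝ) :
    μ {ω | x < |ξ ω|} ≤ ENNReal.ofReal (2 * tail μ ξ x) := by
  have hsub : {ω | x < |ξ ω|} ⊆ {ω | ξ ω > x} ∪ {ω | ξ ω < -x} :=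
    fun ω (hω : x < |ξ ω|) => by
      rcases lt_abs.1 hω with h | h
      · exact Or.inl h
      · exact Or.inr (show ξ ω < -x by linarith)
  have hle : ∀ s : Set Ω, (μ s).toReal ≤ tail μ ξ x → μ s ≤ ENNReal.ofReal (tail μ ξ x) :=
    fun s hs => (ENNReal.le_ofReal_iff_toReal_le (measure_ne_top μ s)
      ((ENNReal.toReal_nonneg).trans hs)).2 hs
  calc μ {ω | x < |ξ ω|} ≤ μ {ω | ξ ω > x} + μ {ω | ξ ω < -x} :=
        (measure_mono hsub).trans (measure_union_le _ _)
    _ ≤ ENNReal.ofReal (tail μ ξ x) + ENNReal.ofReal (tail μ ξ x) :=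
        add_le_add (hle _ (le_max_left _ _)) (hle _ (le_max_right _ _))
    _ = ENNReal.ofReal (2 * tail μ ξ x) := by
        rw [two_mul, ENNReal.ofReal_add] <;>
          exact ENNReal.toReal_nonneg.trans (le_max_left _ _)

lemma mom_le_two_mul_of_meas_lt_abs_le [IsProbabilityMeasure μ] {ξ : Ω → ℝ} {p A : ℝ}
    (hp : 1 ≤ p) (hA : 0 < A)
    (h : ∀ x, A < x → μ {ω | x < |ξ ω|} ≤ ENNReal.ofReal ((A / x) ^ (2 * p))) :
    mom μ ξ p ≤ 2 * A := by
  have hp0 : 0 < p := by linarith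
  have hint : ∫ ω, |ξ ω| ^ p ∂μ ≤ 2 * A ^ p := by
    refine integral_le_two_mul_of_meas_lt_le (fun ω => by positivity) (by positivity)
      fun t ht => ?_
    have ht0 : 0 < t := (rpow_pos_of_pos hA p).trans ht
    set x := t ^ (1 / p)
    have htx : t = x ^ p := by rw [← rpow_mul ht0.le, one_div_mul_cancel hp0.ne', rpow_one]
    rw [htx, rpow_lt_rpow_iff hA.le (by positivity) hp0] at ht
    have hset : {ω | x ^ p < |ξ ω| ^ p} = {ω | x < |ξ ω|} := by
      ext ω; exact rpow_lt_rpow_iff (by positivity) (abs_nonneg _) hp0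
    rw [htx, hset, ← div_rpow hA.le (by positivity), ← rpow_natCast, ← rpow_mul (by positivity),
      mul_comm]
    exact_mod_cast h x ht
  calc mom μ ξ p ≤ (2 * A ^ p) ^ (1 / p) :=
        rpow_le_rpow (integral_nonneg fun ω => by positivity) hint (by positivity)
    _ = 2 ^ (1 / p) * A := by
        rw [mul_rpow zero_le_two (by positivity), ← rpow_mul hA.le, mul_one_div_cancel hp0.ne',
          rpow_one]
    _ ≤ 2 * A := by
        gcongr
        exact rpow_le_self_of_one_le one_le_two (by rw [div_le_one hp0]; exact hp)

lemma meas_lt_abs_le_rpow_of_tail_le [IsFiniteMeasure μ] {ξ : Ω → ℝ} {p A x g : ℝ}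
    (hp : 1 ≤ p) (hA : 0 < A) (hx : A < x) (htail : tail μ ξ x ≤ exp (-g))
    (hg : 2 * p * (1 + log (x / A)) ≤ g) :
    μ {ω | x < |ξ ω|} ≤ ENNReal.ofReal ((A / x) ^ (2 * p)) :=
  calc μ {ω | x < |ξ ω|} ≤ ENNReal.ofReal (2 * tail μ ξ x) := meas_lt_abs_le_two_mul_tail ξ x
    _ ≤ ENNReal.ofReal (2 * exp (-(2 * p * (1 + log (x / A))))) := by
        gcongr
        exact htail.trans (by gcongr)
    _ ≤ ENNReal.ofReal ((A / x) ^ (2 * p)) :=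
        ENNReal.ofReal_le_ofReal (two_mul_exp_neg_le_div_rpow hp hA (hA.trans hx))

end

noncomputable def momentScale (K m r p : ℝ) : ℝ := K * p ^ (1 / m) * log p ^ r

section
variable {C₂ K m r p : ℝ}

lemma momentScale_pos (hK : 0 < K) (hp : 1 < p) : 0 < momentScale K m r p := by
  have := log_pos hp
  unfold momentScale; positivity

lemma log_momentScale (hK : 0 < K) (hp : 1 < p) :
    log (momentScale K m r p) = log K + log p / m + r * log (log p) := by
  have := log_pos hp
  rw [momentScale, log_mul (by positivity) (by positivity), log_mul hK.ne' (by positivity),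
    log_rpow (by linarith), log_rpow this]
  ring

lemma momentScale_rpow (hK : 0 < K) (hm : 0 < m) (hp : 1 < p) :
    momentScale K m r p ^ m = K ^ m * p * log p ^ (m * r) := by
  have := log_pos hp
  rw [momentScale, mul_rpow (by positivity) (by positivity), mul_rpow hK.le (by positivity),
    ← rpow_mul (by linarith), ← rpow_mul this.le, one_div_mul_cancel hm.ne', rpow_one,
    mul_comm r]

lemma growth_of_ratio_bound {κ q M x : ℝ} (hC₂ : 0 < C₂) (hm : 0 < m) (hK : 1 ≤ K)
    (hp : 1 < p) (hM : ∀ w, 0 ≤ w → (1 + w) ^ (1 + q) ≤ M * exp (m / 2 * w))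
    (hKM : 2 * M ≤ C₂ * κ * K ^ (m / 2)) (hx : momentScale K m r p ≤ x)
    (hratio : κ * (1 + log K + log (x / momentScale K m r p)) ^ (-q) ≤
      log p ^ (m * r) * log x ^ (-(m * r))) :
    2 * p * (1 + log (x / momentScale K m r p)) ≤ C₂ * x ^ m * log x ^ (-(m * r)) := by
  set A := momentScale K m r p
  have hA : 0 < A := momentScale_pos (by linarith) hp
  have hxA : 0 < x / A := div_pos (hA.trans_le hx) hA
  set u := log (x / A)
  have hu : 0 ≤ u := log_nonneg ((one_le_div hA).2 hx)
  set w := log K + u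
  have hw : 0 ≤ w := add_nonneg (log_nonneg hK) hu
  have hxm : x ^ m = K ^ m * p * exp (m * u) * log p ^ (m * r) := by
    rw [show x = A * exp u by rw [exp_log hxA]; field_simp, mul_rpow hA.le (exp_pos u).le,
      momentScale_rpow (by linarith) hm hp, ← exp_mul]
    ring_nf
  have hKw : exp (m / 2 * w) = K ^ (m / 2) * exp (m / 2 * u) := by
    rw [mul_add, exp_add, rpow_def_of_pos (by linarith)]
    ring_nf
  have hM1 : 1 ≤ M := by simpa using hM 0 le_rfl
  rw [show 1 + log K + u = 1 + w by ring] at hratio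
  calc 2 * p * (1 + u) ≤ 2 * p * ((1 + w) ^ (1 + q) * (1 + w) ^ (-q)) := by
        rw [← rpow_add (by positivity), add_neg_cancel_right, rpow_one]
        gcongr
        linarith [log_nonneg hK]
    _ ≤ 2 * p * (M * exp (m / 2 * w) * (1 + w) ^ (-q)) := by gcongr; exact hM w hw
    _ = 2 * M * K ^ (m / 2) * (p * exp (m / 2 * u) * (1 + w) ^ (-q)) := by rw [hKw]; ring
    _ ≤ C₂ * κ * K ^ (m / 2) * K ^ (m / 2) * (p * exp (m * u) * (1 + w) ^ (-q)) := by
        gcongr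
        · exact mul_nonneg (by linarith) (by positivity)
        · linarith
    _ = C₂ * K ^ m * p * exp (m * u) * (κ * (1 + w) ^ (-q)) := by
        rw [mul_assoc _ (K ^ (m / 2)) (K ^ (m / 2)), ← rpow_add (by linarith), add_halves]
        ring
    _ ≤ C₂ * K ^ m * p * exp (m * u) * (log p ^ (m * r) * log x ^ (-(m * r))) := by
        gcongr
    _ = C₂ * x ^ m * log x ^ (-(m * r)) := by rw [hxm]; ring

lemma log_momentScale_ge_of_nonpos (hm : 0 < m) (hr : r ≤ 0) (hK0 : 0 < K)
    (hK : 1 - r * (log (2 * m * (1 - r)) - 1) ≤ log K) (hp : 1 < p) :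
    1 + log p / (2 * m) ≤ log (momentScale K m r p) := by
  have hL := log_pos hp
  set c := 2 * m * (1 - r)
  have hc : 0 < c := mul_pos (by positivity) (by linarith)
  have hlogL : log (log p) ≤ log p / c + log c - 1 := by
    have := log_le_sub_one_of_pos (div_pos hL hc)
    rw [log_div hL.ne' hc.ne'] at this
    linarith
  have hrL : r * (log p / c) + log p / (2 * m) = log p / c := by
    field_simp
    ring
  have hm2 : log p / m = 2 * (log p / (2 * m)) := by field_simp
  rw [log_momentScale hK0 hp]
  nlinarith [mul_le_mul_of_nonpos_left hlogL hr, div_pos hL hc]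

lemma log_momentScale_ge_of_nonneg (hm : 0 < m) (hr : 0 ≤ r) (hK0 : 0 < K)
    (hK : 1 - r * log (log 2) ≤ log K) (hp : 2 ≤ p) :
    1 ≤ log (momentScale K m r p) := by
  have hlogL : log (log 2) ≤ log (log p) :=
    log_le_log (log_pos one_lt_two) (log_le_log two_pos hp)
  rw [log_momentScale hK0 (by linarith)]
  have hLm : 0 ≤ log p / m := div_nonneg (log_nonneg (by linarith)) hm.le
  nlinarith [mul_le_mul_of_nonneg_left hlogL hr]

lemma ratio_bound_of_pos {x : ℝ} (hm : 0 < m) (hr : 0 < r) (hK : 1 ≤ K) (hp : 2 ≤ p)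
    (hA : 0 < log (momentScale K m r p)) (hx : momentScale K m r p ≤ x) :
    (1 / m + r + 1 / log 2) ^ (-(m * r)) *
        (1 + log K + log (x / momentScale K m r p)) ^ (-(m * r)) ≤
      log p ^ (m * r) * log x ^ (-(m * r)) := by
  set A := momentScale K m r p
  set B := 1 / m + r + 1 / log 2
  set v := 1 + log K + log (x / A)
  have hA0 : 0 < A := momentScale_pos (by linarith) (by linarith)
  have hL2 : log 2 ≤ log p := log_le_log two_pos hp
  have hL : 0 < log p := (log_pos one_lt_two).trans_le hL2
  have hu : 0 ≤ log (x / A) := log_nonneg ((one_le_div hA0).2 hx)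
  have hlogK : 0 ≤ log K := log_nonneg hK
  have hBL : 1 ≤ log p / log 2 := (one_le_div (log_pos one_lt_two)).2 hL2
  have hlogx : log x = log K + log p / m + r * log (log p) + log (x / A) := by
    rw [log_div (hA0.trans_le hx).ne' hA0.ne', ← log_momentScale (by linarith) (by linarith)]
    ring
  have hlogx_le : log x ≤ B * log p * v := by
    have h1 : r * log (log p) ≤ r * log p := mul_le_mul_of_nonneg_left (log_le_self hL.le) hr.le
    have h2 : B * log p = (1 / m + r) * log p + log p / log 2 := by ring
    have h3 : 1 ≤ B * log p := by
      rw [h2]; nlinarith [mul_nonneg (by positivity : 0 ≤ 1 / m + r) hL.le]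
    have h4 : log K + log (x / A) ≤ B * log p * (log K + log (x / A)) := by nlinarith
    have h5 : B * log p * v = B * log p + B * log p * (log K + log (x / A)) := by ring
    rw [hlogx, h5]
    have : log p / m = 1 / m * log p := by ring
    linarith
  have hlogx_pos : 0 < log x := hA.trans_le (log_le_log hA0 hx)
  have hB : 0 < B := by positivity
  have hv : 0 < v := by positivity
  calc B ^ (-(m * r)) * v ^ (-(m * r)) = log p ^ (m * r) * (B * log p * v) ^ (-(m * r)) := by
        rw [mul_rpow (by positivity) hv.le, mul_rpow hB.le hL.le, rpow_neg hL.le]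
        field_simp
    _ ≤ log p ^ (m * r) * log x ^ (-(m * r)) :=
        mul_le_mul_of_nonneg_left
          (rpow_le_rpow_of_nonpos hlogx_pos hlogx_le (neg_nonpos.2 (by positivity))) (by positivity)

lemma exists_momentScale_of_ratio_bound {q κ : ℝ} (hC₂ : 0 < C₂) (hm : 0 < m) (hq : 0 ≤ q)
    (hκ : 0 < κ) (c : ℝ)
    (hratio : ∀ K, 1 ≤ K → c ≤ log K → ∀ p, 2 ≤ p → 1 ≤ log (momentScale K m r p) ∧
      ∀ x, momentScale K m r p ≤ x →
        κ * (1 + log K + log (x / momentScale K m r p)) ^ (-q) ≤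
          log p ^ (m * r) * log x ^ (-(m * r))) :
    ∃ K > 0, ∀ p, 2 ≤ p → exp 1 ≤ momentScale K m r p ∧ ∀ x, momentScale K m r p ≤ x →
      2 * p * (1 + log (x / momentScale K m r p)) ≤ C₂ * x ^ m * log x ^ (-(m * r)) := by
  set M := max 1 ((1 + q) / (m / 2)) ^ (1 + q)
  have hM : ∀ w, 0 ≤ w → (1 + w) ^ (1 + q) ≤ M * exp (m / 2 * w) := fun w hw =>
    one_add_rpow_le_mul_exp (by linarith) (half_pos hm) hw
  obtain ⟨K, hK1, hKc, hKM⟩ := ((eventually_ge_atTop 1).and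
    ((tendsto_log_atTop.eventually_ge_atTop c).and
      ((tendsto_rpow_atTop (half_pos hm)).eventually_ge_atTop (2 * M / (C₂ * κ))))).exists
  rw [div_le_iff₀ (by positivity), mul_comm] at hKM
  refine ⟨K, by linarith, fun p hp => ?_⟩
  obtain ⟨hA, hratioK⟩ := hratio K hK1 hKc p hp
  refine ⟨(le_log_iff_exp_le (momentScale_pos (by linarith) (by linarith))).1 hA, fun x hx => ?_⟩
  exact growth_of_ratio_bound hC₂ hm hK1 (by linarith) hM (by linarith) hx (hratioK x hx)

lemma exists_momentScale (hC₂ : 0 < C₂) (hm : 0 < m) (r : ℝ) :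
    ∃ K > 0, ∀ p, 2 ≤ p → exp 1 ≤ momentScale K m r p ∧ ∀ x, momentScale K m r p ≤ x →
      2 * p * (1 + log (x / momentScale K m r p)) ≤ C₂ * x ^ m * log x ^ (-(m * r)) := by
  rcases le_or_gt r 0 with hr | hr
  · refine exists_momentScale_of_ratio_bound hC₂ hm le_rfl (κ := (2 * m) ^ (m * r))
      (by positivity) (1 - r * (log (2 * m * (1 - r)) - 1)) fun K hK1 hKc p hp => ?_
    have hA := log_momentScale_ge_of_nonpos hm hr (by linarith) hKc (by linarith : 1 < p)
    have hLm : 0 ≤ log p / (2 * m) := div_nonneg (log_nonneg (by linarith)) (by positivity)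
    refine ⟨by linarith, fun x hx => ?_⟩
    rw [neg_zero, rpow_zero, mul_one]
    exact le_rpow_mul_rpow_neg_of_nonpos hm hr (log_pos (by linarith))
      (by linarith [log_le_log (momentScale_pos (by linarith) (by linarith)) hx])
  · refine exists_momentScale_of_ratio_bound hC₂ hm (q := m * r) (by positivity)
      (κ := (1 / m + r + 1 / log 2) ^ (-(m * r))) (by positivity) (1 - r * log (log 2))
      fun K hK1 hKc p hp => ?_
    have hA := log_momentScale_ge_of_nonneg hm hr.le (by linarith) hKc hp
    exact ⟨hA, fun x hx => ratio_bound_of_pos hm hr hK1 hp (by linarith) hx⟩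

end

/-- the tail bound T_ξ(x) ≤ exp(−C₂ x^m (ln x)^{−mr}) for x > e implies the
moment growth |ξ|_p ≤ C₁ p^{1/m} (ln p)^r for all p ≥ 2, with C₁ = C₁(C₂, m, r) < ∞. -/
theorem stmt3 (C₂ m r : ℝ) (hC₂ : 0 < C₂) (hm : 0 < m) :
    ∃ C₁ : ℝ, 0 < C₁ ∧
      ∀ (Ω : Type) (_ : MeasurableSpace Ω) (μ : Measure Ω), IsProbabilityMeasure μ →
      ∀ ξ : Ω → ℝ,
      (∀ x : ℝ, Real.exp 1 < x →
        tail μ ξ x ≤ Real.exp (-(C₂ * x ^ m * Real.log x ^ (-(m * r))))) →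
      ∀ p : ℝ, 2 ≤ p → mom μ ξ p ≤ C₁ * p ^ (1/m) * Real.log p ^ r := by
  obtain ⟨K, hK, hscale⟩ := exists_momentScale hC₂ hm r
  refine ⟨2 * K, by positivity, fun Ω _ μ _ ξ htail p hp => ?_⟩
  obtain ⟨hA, hgrowth⟩ := hscale p hp
  have hA0 : 0 < momentScale K m r p := (exp_pos 1).trans_le hA
  calc mom μ ξ p ≤ 2 * momentScale K m r p :=
        mom_le_two_mul_of_meas_lt_abs_le (by linarith) hA0 fun x hx =>
          meas_lt_abs_le_rpow_of_tail_le (by linarith) hA0 hx (htail x (hA.trans_lt hx))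
            (hgrowth x hx.le)
    _ = 2 * K * p ^ (1 / m) * log p ^ r := by rw [momentScale]; ring
end

section
/- Let β > 0 and C₄ > 0. If a real-valued random variable ξ satisfies max(P(ξ > x), P(ξ < −x)) ≤ exp(−C₄ · (ln(1 + x))^{1 + 1/β}) for all x ≥ 0, then there exists C₃ = C₃(C₄, β) > 0 such that (E|ξ|^p)^{1/p} ≤ C · exp(C₃ · p^β) for all p ≥ 2 and some constant C. -/
open MeasureTheory Real Set

lemma pow_div_fact_le_exp (x : ℝ) (hx : 0 ≤ x) (n : ℕ) : x ^ n / n.factorial ≤ Real.exp x := by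
  calc x ^ n / n.factorial ≤ ∑ i ∈ Finset.range (n+1), x ^ i / i.factorial := by
        refine Finset.single_le_sum (f := fun i => x ^ i / (i.factorial : ℝ)) ?_ ?_
        · intro i _; positivity
        · simp
    _ ≤ Real.exp x := Real.sum_le_exp_of_nonneg hx _

/-- the tail bound T_ξ(x) ≤ exp(−C₄ (ln(1+x))^{1+1/β}) for all x ≥ 0 implies
|ξ|_p ≤ C exp(C₃ p^β) for all p ≥ 2, for some constants C₃ = C₃(C₄, β) > 0 and C. -/
theorem stmt5 (β C₄ : ℝ) (hβ : 0 < β) (hC₄ : 0 < C₄) :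
    ∃ C₃ : ℝ, 0 < C₃ ∧ ∃ C : ℝ, 0 < C ∧
      ∀ (Ω : Type) (_ : MeasurableSpace Ω) (μ : Measure Ω), IsProbabilityMeasure μ →
      ∀ ξ : Ω → ℝ,
      (∀ x : ℝ, 0 ≤ x →
        tail μ ξ x ≤ Real.exp (-(C₄ * Real.log (1 + x) ^ (1 + 1/β)))) →
      ∀ p : ℝ, 2 ≤ p → mom μ ξ p ≤ C * Real.exp (C₃ * p ^ β) := by
  set n := ⌈1/β⌉₊ with hn
  refine ⟨1 + (3/(2*C₄))^β, by positivity, 3 * n.factorial, by positivity, ?_⟩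
  intro Ω mΩ μ hμ ξ htail p hp
  have hp0 : 0 < p := by linarith
  set a := ((p+1)/C₄)^β with ha
  have ha0 : 0 < a := Real.rpow_pos_of_pos (by positivity) β
  set A := Real.exp a with hA
  have hApos : 0 < A := Real.exp_pos a
  have hA1 : 1 < A := by rw [hA]; exact Real.one_lt_exp_iff.mpr ha0
  -- the final numeric bound
  have hfinal : 3 * p * A ≤ (3 * n.factorial) * Real.exp ((1 + (3/(2*C₄))^β) * p ^ β) := by
    have hpβ0 : (0:ℝ) ≤ p ^ β := Real.rpow_nonneg hp0.le β
    have hβn : 1 ≤ β * n := by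
      have h1 : (1/β : ℝ) ≤ n := Nat.le_ceil _
      calc (1:ℝ) = β * (1/β) := by field_simp
        _ ≤ β * n := by nlinarith
    have hp_le : p ≤ n.factorial * Real.exp (p ^ β) := by
      have h1 : p = p ^ (1:ℝ) := (Real.rpow_one p).symm
      have h2 : p ^ (1:ℝ) ≤ p ^ (β * n) :=
        Real.rpow_le_rpow_of_exponent_le (by linarith) hβn
      have h3 : p ^ (β * (n:ℝ)) = (p ^ β) ^ n := by
        rw [Real.rpow_mul hp0.le, Real.rpow_natCast]
      have h4 : (p ^ β) ^ n ≤ n.factorial * Real.exp (p ^ β) := by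
        have := pow_div_fact_le_exp (p ^ β) hpβ0 n
        have hf : (0:ℝ) < n.factorial := by positivity
        calc (p ^ β) ^ n = (p ^ β) ^ n / n.factorial * n.factorial := by field_simp
          _ ≤ Real.exp (p ^ β) * n.factorial := by nlinarith
          _ = n.factorial * Real.exp (p ^ β) := by ring
      calc p = p ^ (1:ℝ) := h1
        _ ≤ p ^ (β * (n:ℝ)) := h2
        _ = (p ^ β) ^ n := h3
        _ ≤ n.factorial * Real.exp (p ^ β) := h4
    have haux : a ≤ (3/(2*C₄))^β * p ^ β := by
      have h1 : (p+1)/C₄ ≤ (3/(2*C₄)) * p := by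
        rw [div_le_iff₀ hC₄]
        have : (3/(2*C₄)) * p * C₄ = (3/2) * p := by field_simp
        rw [this]; linarith
      calc a = ((p+1)/C₄)^β := ha
        _ ≤ ((3/(2*C₄)) * p)^β := Real.rpow_le_rpow (by positivity) h1 hβ.le
        _ = (3/(2*C₄))^β * p ^ β := Real.mul_rpow (by positivity) hp0.le
    have hexp : A ≤ Real.exp ((3/(2*C₄))^β * p ^ β) := Real.exp_le_exp.mpr haux
    calc 3 * p * A ≤ 3 * (n.factorial * Real.exp (p ^ β)) * Real.exp ((3/(2*C₄))^β * p ^ β) := by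
          apply mul_le_mul (by nlinarith [Real.exp_pos (p^β)]) hexp hApos.le (by positivity)
      _ = (3 * n.factorial) * Real.exp ((1 + (3/(2*C₄))^β) * p ^ β) := by
          rw [show ((1 + (3/(2*C₄))^β) * p ^ β) = p ^ β + (3/(2*C₄))^β * p ^ β by ring,
            Real.exp_add]; ring
  by_cases hint : Integrable (fun ω => |ξ ω| ^ p) μ
  · -- measurability of |ξ|
    have hfm : AEMeasurable (fun ω => |ξ ω|) μ := by
      have h1 : AEMeasurable (fun ω => (|ξ ω| ^ p) ^ (p⁻¹)) μ :=
        hint.aemeasurable.pow aemeasurable_const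
      exact h1.congr (Filter.Eventually.of_forall fun ω =>
        Real.rpow_rpow_inv (abs_nonneg _) hp0.ne')
    have key := lintegral_rpow_eq_lintegral_meas_lt_mul μ
      (f := fun ω => |ξ ω|) (Filter.Eventually.of_forall fun ω => abs_nonneg _) hfm hp0
    -- pointwise tail bound on Ioi A
    have htail2 : ∀ t : ℝ, t ∈ Ioi A →
        μ {ω | t < |ξ ω|} * ENNReal.ofReal (t ^ (p-1)) ≤ ENNReal.ofReal (2 * t ^ (-2 : ℝ)) := by
      intro t ht
      rw [mem_Ioi] at ht
      have ht1 : 1 < t := lt_trans hA1 ht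
      have ht0 : 0 < t := by linarith
      have h1 := htail t (by linarith)
      have hμ1 : μ {ω | ξ ω > t} ≤ ENNReal.ofReal (Real.exp (-(C₄ * Real.log (1 + t) ^ (1 + 1/β)))) := by
        rw [ENNReal.le_ofReal_iff_toReal_le (measure_ne_top μ _) (Real.exp_nonneg _)]
        exact le_trans (le_max_left _ _) h1
      have hμ2 : μ {ω | ξ ω < -t} ≤ ENNReal.ofReal (Real.exp (-(C₄ * Real.log (1 + t) ^ (1 + 1/β)))) := by
        rw [ENNReal.le_ofReal_iff_toReal_le (measure_ne_top μ _) (Real.exp_nonneg _)]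
        exact le_trans (le_max_right _ _) h1
      have hsub : {ω | t < |ξ ω|} ⊆ {ω | ξ ω > t} ∪ {ω | ξ ω < -t} := by
        intro ω hω
        rw [mem_setOf_eq] at hω
        rcases lt_abs.mp hω with h | h
        · exact Or.inl h
        · exact Or.inr (by simp only [mem_setOf_eq]; linarith)
      have hμ3 : μ {ω | t < |ξ ω|} ≤
          ENNReal.ofReal (Real.exp (-(C₄ * Real.log (1 + t) ^ (1 + 1/β)))) +
          ENNReal.ofReal (Real.exp (-(C₄ * Real.log (1 + t) ^ (1 + 1/β)))) :=
        le_trans (le_trans (measure_mono hsub) (measure_union_le _ _)) (add_le_add hμ1 hμ2)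
      -- the analytic inequality
      have hlogt : a ≤ Real.log t := by
        calc a = Real.log A := (Real.log_exp a).symm
          _ ≤ Real.log t := Real.log_le_log hApos ht.le
      have hlogt0 : 0 < Real.log t := lt_of_lt_of_le ha0 hlogt
      have hL : Real.log t ≤ Real.log (1 + t) := Real.log_le_log ht0 (by linarith)
      have hLpos : 0 < Real.log (1 + t) := lt_of_lt_of_le hlogt0 hL
      have hkey : (p+1) * Real.log t ≤ C₄ * Real.log (1 + t) ^ (1 + 1/β) := by
        have h2 : Real.log (1+t) ^ ((1:ℝ) + 1/β)
            = Real.log (1+t) * Real.log (1+t) ^ (1/β : ℝ) := by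
          rw [Real.rpow_add hLpos, Real.rpow_one]
        have h3 : ((p+1)/C₄ : ℝ) ≤ Real.log (1+t) ^ (1/β : ℝ) := by
          have h4 : a ^ (1/β : ℝ) ≤ Real.log (1+t) ^ (1/β : ℝ) :=
            Real.rpow_le_rpow ha0.le (le_trans hlogt hL) (by positivity)
          have h5 : a ^ (1/β : ℝ) = (p+1)/C₄ := by
            rw [ha, one_div, Real.rpow_rpow_inv (by positivity) hβ.ne']
          linarith [h4, h5.symm.le]
        have h6 : Real.log t * ((p+1)/C₄) ≤ Real.log (1+t) * Real.log (1+t) ^ (1/β : ℝ) := by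
          apply mul_le_mul hL h3 (by positivity) hLpos.le
        rw [h2]
        calc (p+1) * Real.log t = C₄ * (Real.log t * ((p+1)/C₄)) := by field_simp
          _ ≤ C₄ * (Real.log (1+t) * Real.log (1+t) ^ (1/β : ℝ)) := by nlinarith
      have hTle : Real.exp (-(C₄ * Real.log (1 + t) ^ (1 + 1/β))) ≤ t ^ (-(p+1)) := by
        rw [Real.rpow_def_of_pos ht0]
        apply Real.exp_le_exp.mpr
        nlinarith
      calc μ {ω | t < |ξ ω|} * ENNReal.ofReal (t ^ (p-1))
          ≤ (ENNReal.ofReal (Real.exp (-(C₄ * Real.log (1 + t) ^ (1 + 1/β)))) +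
             ENNReal.ofReal (Real.exp (-(C₄ * Real.log (1 + t) ^ (1 + 1/β))))) *
            ENNReal.ofReal (t ^ (p-1)) := mul_le_mul_left hμ3 _
        _ = ENNReal.ofReal ((Real.exp (-(C₄ * Real.log (1 + t) ^ (1 + 1/β))) +
              Real.exp (-(C₄ * Real.log (1 + t) ^ (1 + 1/β)))) * t ^ (p-1)) := by
            rw [← ENNReal.ofReal_add (Real.exp_nonneg _) (Real.exp_nonneg _),
              ← ENNReal.ofReal_mul (by positivity)]
        _ ≤ ENNReal.ofReal (2 * t ^ (-2:ℝ)) := by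
            apply ENNReal.ofReal_le_ofReal
            have h8 : t ^ (-(p+1)) * t ^ (p-1) = t ^ (-2:ℝ) := by
              rw [← Real.rpow_add ht0]; congr 1; ring
            have h9 : (0:ℝ) ≤ t ^ (p-1) := Real.rpow_nonneg ht0.le _
            nlinarith [hTle, h8, Real.exp_nonneg (-(C₄ * Real.log (1 + t) ^ (1 + 1/β)))]
    -- bound the layer-cake integral
    have hub : (∫⁻ t in Ioi (0:ℝ), μ {ω | t < |ξ ω|} * ENNReal.ofReal (t ^ (p-1)))
        ≤ ENNReal.ofReal (A ^ p + 2) := by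
      have hsplit : Ioc (0:ℝ) A ∪ Ioi A = Ioi 0 := Ioc_union_Ioi_eq_Ioi hApos.le
      have piece1 : (∫⁻ t in Ioc (0:ℝ) A, μ {ω | t < |ξ ω|} * ENNReal.ofReal (t ^ (p-1)))
          ≤ ENNReal.ofReal (A ^ p) := by
        have hmono : ∀ t ∈ Ioc (0:ℝ) A,
            μ {ω | t < |ξ ω|} * ENNReal.ofReal (t ^ (p-1)) ≤ ENNReal.ofReal (A ^ (p-1)) := by
          intro t ht
          calc μ {ω | t < |ξ ω|} * ENNReal.ofReal (t ^ (p-1))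
              ≤ 1 * ENNReal.ofReal (A ^ (p-1)) := by
                apply mul_le_mul' prob_le_one
                exact ENNReal.ofReal_le_ofReal
                  (Real.rpow_le_rpow ht.1.le ht.2 (by linarith))
            _ = ENNReal.ofReal (A ^ (p-1)) := one_mul _
        calc (∫⁻ t in Ioc (0:ℝ) A, μ {ω | t < |ξ ω|} * ENNReal.ofReal (t ^ (p-1)))
            ≤ ∫⁻ _ in Ioc (0:ℝ) A, ENNReal.ofReal (A ^ (p-1)) :=
              setLIntegral_mono measurable_const hmono
          _ = ENNReal.ofReal (A ^ (p-1)) * ENNReal.ofReal A := by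
              rw [setLIntegral_const, Real.volume_Ioc, sub_zero]
          _ = ENNReal.ofReal (A ^ p) := by
              rw [← ENNReal.ofReal_mul (Real.rpow_nonneg hApos.le _)]
              congr 1
              rw [← Real.rpow_add_one hApos.ne']
              norm_num
      have piece2 : (∫⁻ t in Ioi A, μ {ω | t < |ξ ω|} * ENNReal.ofReal (t ^ (p-1)))
          ≤ ENNReal.ofReal 2 := by
        have hmeas : Measurable (fun t : ℝ => ENNReal.ofReal (2 * t ^ (-2:ℝ))) :=
          ((measurable_id.pow measurable_const).const_mul 2).ennreal_ofReal
        have step1 : (∫⁻ t in Ioi A, μ {ω | t < |ξ ω|} * ENNReal.ofReal (t ^ (p-1)))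
            ≤ ∫⁻ t in Ioi A, ENNReal.ofReal (2 * t ^ (-2:ℝ)) :=
          setLIntegral_mono hmeas htail2
        have hig : IntegrableOn (fun t : ℝ => 2 * t ^ (-2:ℝ)) (Ioi A) :=
          (integrableOn_Ioi_rpow_of_lt (by norm_num) hApos).const_mul 2
        have step2 : (∫⁻ t in Ioi A, ENNReal.ofReal (2 * t ^ (-2:ℝ)))
            = ENNReal.ofReal (∫ t in Ioi A, 2 * t ^ (-2:ℝ)) := by
          have hnn : 0 ≤ᵐ[volume.restrict (Ioi A)] fun t : ℝ => 2 * t ^ (-2:ℝ) := by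
            filter_upwards [ae_restrict_mem measurableSet_Ioi] with t ht
            have ht0 : (0:ℝ) < t := lt_trans hApos ht
            exact mul_nonneg (by norm_num) (Real.rpow_nonneg ht0.le _)
          rw [← ofReal_integral_eq_lintegral_ofReal hig hnn]
        have step3 : (∫ t in Ioi A, 2 * t ^ (-2:ℝ)) ≤ 2 := by
          rw [integral_const_mul, integral_Ioi_rpow_of_lt (by norm_num) hApos]
          have h1 : A ^ (-2 + 1 : ℝ) ≤ 1 :=
            Real.rpow_le_one_of_one_le_of_nonpos hA1.le (by norm_num)
          have h2 : (0:ℝ) ≤ A ^ (-2 + 1 : ℝ) := Real.rpow_nonneg hApos.le _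
          have h3 : -A ^ (-2 + 1 : ℝ) / (-2 + 1) = A ^ (-2 + 1 : ℝ) := by ring
          rw [h3]
          linarith
        calc (∫⁻ t in Ioi A, μ {ω | t < |ξ ω|} * ENNReal.ofReal (t ^ (p-1)))
            ≤ ∫⁻ t in Ioi A, ENNReal.ofReal (2 * t ^ (-2:ℝ)) := step1
          _ = ENNReal.ofReal (∫ t in Ioi A, 2 * t ^ (-2:ℝ)) := step2
          _ ≤ ENNReal.ofReal 2 := ENNReal.ofReal_le_ofReal step3
      calc (∫⁻ t in Ioi (0:ℝ), μ {ω | t < |ξ ω|} * ENNReal.ofReal (t ^ (p-1)))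
          = ∫⁻ t in Ioc (0:ℝ) A ∪ Ioi A, μ {ω | t < |ξ ω|} * ENNReal.ofReal (t ^ (p-1)) := by
            rw [hsplit]
        _ ≤ (∫⁻ t in Ioc (0:ℝ) A, μ {ω | t < |ξ ω|} * ENNReal.ofReal (t ^ (p-1)))
            + ∫⁻ t in Ioi A, μ {ω | t < |ξ ω|} * ENNReal.ofReal (t ^ (p-1)) :=
            lintegral_union_le _ _ _
        _ ≤ ENNReal.ofReal (A ^ p) + ENNReal.ofReal 2 := add_le_add piece1 piece2
        _ = ENNReal.ofReal (A ^ p + 2) := by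
            rw [← ENNReal.ofReal_add (Real.rpow_nonneg hApos.le _) (by norm_num)]
    have hlint : (∫⁻ ω, ENNReal.ofReal (|ξ ω| ^ p) ∂μ) ≤ ENNReal.ofReal (p * (A ^ p + 2)) := by
      rw [key]
      calc ENNReal.ofReal p * (∫⁻ t in Ioi (0:ℝ), μ {ω | t < |ξ ω|} * ENNReal.ofReal (t ^ (p-1)))
          ≤ ENNReal.ofReal p * ENNReal.ofReal (A ^ p + 2) := mul_le_mul_right hub _
        _ = ENNReal.ofReal (p * (A ^ p + 2)) := (ENNReal.ofReal_mul hp0.le).symm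
    have hInt : (∫ ω, |ξ ω| ^ p ∂μ) ≤ p * (A ^ p + 2) := by
      rw [integral_eq_lintegral_of_nonneg_ae
        (Filter.Eventually.of_forall fun ω => Real.rpow_nonneg (abs_nonneg _) p)
        hint.aestronglyMeasurable]
      exact ENNReal.toReal_le_of_le_ofReal (by positivity) hlint
    have hmom : mom μ ξ p ≤ 3 * p * A := by
      have hApow1 : (1:ℝ) ≤ A ^ p := Real.one_le_rpow hA1.le hp0.le
      have hintnn : (0:ℝ) ≤ ∫ ω, |ξ ω| ^ p ∂μ :=
        integral_nonneg fun ω => Real.rpow_nonneg (abs_nonneg _) p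
      calc mom μ ξ p = (∫ ω, |ξ ω| ^ p ∂μ) ^ (1/p) := rfl
        _ ≤ (p * (A ^ p + 2)) ^ (1/p) :=
          Real.rpow_le_rpow hintnn hInt (by positivity)
        _ ≤ (3 * p * A ^ p) ^ (1/p) := by
          apply Real.rpow_le_rpow (by positivity) ?_ (by positivity)
          nlinarith
        _ = (3*p) ^ (1/p) * A := by
          rw [Real.mul_rpow (by positivity) (by positivity), one_div,
            Real.rpow_rpow_inv hApos.le hp0.ne']
        _ ≤ 3 * p * A := by
          have h1 : (3*p) ^ (1/p : ℝ) ≤ 3*p := by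
            nth_rewrite 2 [← Real.rpow_one (3*p)]
            exact Real.rpow_le_rpow_of_exponent_le (by linarith)
              (by rw [div_le_one hp0]; linarith)
          nlinarith
    exact le_trans hmom hfinal
  · unfold mom
    rw [integral_undef hint, Real.zero_rpow (one_div_ne_zero hp0.ne')]
    positivity
end

section
/- Let ξ₁, …, ξ_n be independent centered real-valued random variables with E|ξ_i|^p < ∞ for some p ≥ 2. Then (E|Σ_{i=1}^n ξ_i|^p)^{1/p} ≤ C · (p / ln p) · max( (Σ E ξ_i²)^{1/2}, (Σ E|ξ_i|^p)^{1/p} ) for an absolute constant C, i.e., the Rosenthal constant in the L^p inequality for sums of independent centered random variables grows as p/ln p. -/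
/-!
Compare `|s|^p` with the smooth potential
`φ(s) = (t² + s²)^{p/2}`. Write `t² + (r + x)² = (t² + r²)(1 + w)` and `z = |x|/t`, so that
`|w| ≤ z + z²`. The scalar inequality
`(1 + w)^{p/2} ≤ 1 + (p/2) w + p²√p z² + (12p/log p)^p z^p`
is proved by splitting at `z = log p / (4p)`: below it `(1 + w)^{p/2} ≤ e^{pw/2}` and
`e^{|pw/2|} ≤ √p`, above it the `p`-th power term dominates. Hence
`φ(r + x) ≤ φ(r) + φ'(r) x + φ(r) δ(x)` with `δ(x) = 2p²√p x²/t² + (12p/log p)^p |x|^p/t^p`.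
For `X` centered and independent of `S` the linear term has mean zero, so
`E φ(S + X) ≤ E φ(S) (1 + E δ(X))`. Iterating, `E|Sₙ|^p ≤ E φ(Sₙ) ≤ t^p exp(Σ E δ(ξᵢ))`,
and the exponent is at most `p` once `t ≥ 16 (p/log p) max(‖·‖₂, ‖·‖_p)`, which gives
`‖Sₙ‖_p ≤ e t`.
-/

open MeasureTheory Real Set ProbabilityTheory

lemma exp_le_one_add_add_sq_mul_exp_abs (x : ℝ) : exp x ≤ 1 + x + x ^ 2 * exp |x| := by
  have hx₀ : exp x * exp (-x) = 1 := by rw [← exp_add, add_neg_cancel, exp_zero]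
  have key : exp x - 1 ≤ x * exp x := by nlinarith [add_one_le_exp (-x), exp_pos x]
  rcases le_total 0 x with hx | hx
  · rw [abs_of_nonneg hx]
    nlinarith [mul_le_mul_of_nonneg_left key hx]
  · rw [abs_of_nonpos hx]
    nlinarith [add_one_le_exp x, one_le_exp (neg_nonneg.2 hx), sq_nonneg x,
      mul_le_mul_of_nonneg_left (one_le_exp (neg_nonneg.2 hx)) (sq_nonneg x)]

lemma one_le_div_log {p : ℝ} (hp : 1 < p) : 1 ≤ p / log p := by
  rw [one_le_div (log_pos hp)]
  linarith [log_le_sub_one_of_pos (by linarith : 0 < p)]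

lemma one_add_rpow_half_le_of_le_log_div {p z w : ℝ} (hp : 2 ≤ p) (hz : 0 ≤ z)
    (hzp : z ≤ log p / (4 * p)) (hw : 0 ≤ 1 + w) (hwz : |w| ≤ z + z ^ 2) :
    (1 + w) ^ (p / 2) ≤ 1 + p / 2 * w + p ^ 2 * √p * z ^ 2 := by
  have hp₀ : 0 < p := by linarith
  have hpz : p * z ≤ log p / 4 := by
    rw [le_div_iff₀ (by positivity)] at hzp; linarith
  have hz₁ : z ≤ 1 / 4 := by
    nlinarith [log_le_sub_one_of_pos hp₀]
  have hw₁ : |p / 2 * w| ≤ 5 / 8 * (p * z) := by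
    have : |w| ≤ 5 / 4 * z := by nlinarith
    rw [abs_mul, abs_of_pos (by positivity)]; nlinarith
  have hexp : (1 + w) ^ (p / 2) ≤ exp (p / 2 * w) := by
    rw [mul_comm, exp_mul]
    exact rpow_le_rpow hw (by linarith [add_one_le_exp w]) (by positivity)
  have hsq : (p / 2 * w) ^ 2 ≤ p ^ 2 * z ^ 2 := by
    rw [← sq_abs]; nlinarith [abs_nonneg (p / 2 * w)]
  have hexp_abs : exp |p / 2 * w| ≤ √p := by
    rw [sqrt_eq_rpow, rpow_def_of_pos hp₀]
    exact exp_le_exp.2 (by nlinarith [log_nonneg (by linarith : (1 : ℝ) ≤ p)])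
  calc (1 + w) ^ (p / 2) ≤ 1 + p / 2 * w + (p / 2 * w) ^ 2 * exp |p / 2 * w| :=
        hexp.trans (exp_le_one_add_add_sq_mul_exp_abs _)
    _ ≤ 1 + p / 2 * w + p ^ 2 * z ^ 2 * √p := by gcongr
    _ = 1 + p / 2 * w + p ^ 2 * √p * z ^ 2 := by ring

lemma one_add_rpow_add_half_mul_le {p u z : ℝ} (hp : 1 ≤ p) (hu : 1 ≤ u) (hz : 0 ≤ z)
    (huz : 1 ≤ 4 * u * z) :
    (1 + z) ^ p + p / 2 * z ≤ (12 * u) ^ p * z ^ p := by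
  have hbern : 1 + p * z ≤ (1 + z) ^ p := one_add_mul_self_le_rpow_one_add (by linarith) hp
  have hlin : 1 + z ≤ 5 * u * z := by nlinarith
  have hratio : (3 / 2 : ℝ) ≤ (12 / 5) ^ p := by
    calc (3 / 2 : ℝ) ≤ (12 / 5) ^ (1 : ℝ) := by norm_num
      _ ≤ (12 / 5) ^ p := rpow_le_rpow_of_exponent_le (by norm_num) hp
  calc (1 + z) ^ p + p / 2 * z ≤ 3 / 2 * (1 + z) ^ p := by nlinarith
    _ ≤ (12 / 5) ^ p * (5 * u * z) ^ p := by gcongr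
    _ = (12 * u) ^ p * z ^ p := by
        rw [← mul_rpow (by norm_num) (by positivity), ← mul_rpow (by positivity) hz]
        ring_nf

lemma half_le_sq_mul_sqrt {p : ℝ} (hp : 2 ≤ p) : p / 2 ≤ p ^ 2 * √p := by
  have : 1 ≤ √p := one_le_sqrt.2 (by linarith)
  nlinarith

lemma one_add_rpow_half_le {p z w : ℝ} (hp : 2 ≤ p) (hz : 0 ≤ z) (hw : 0 ≤ 1 + w)
    (hwz : |w| ≤ z + z ^ 2) :
    (1 + w) ^ (p / 2) ≤
      1 + p / 2 * w + p ^ 2 * √p * z ^ 2 + (12 * (p / log p)) ^ p * z ^ p := by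
  have hu : 1 ≤ p / log p := one_le_div_log (by linarith)
  have hp_le : p / 2 ≤ p ^ 2 * √p := half_le_sq_mul_sqrt hp
  rcases le_or_gt z (log p / (4 * p)) with hzp | hzp
  · have := one_add_rpow_half_le_of_le_log_div hp hz hzp hw hwz
    have : 0 ≤ (12 * (p / log p)) ^ p * z ^ p := by positivity
    linarith
  · have huz : 1 ≤ 4 * (p / log p) * z := by
      rw [div_lt_iff₀ (by positivity)] at hzp
      rw [show 4 * (p / log p) * z = z * (4 * p) / log p by ring,
        le_div_iff₀ (log_pos (by linarith))]
      linarith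
    have hsq : (1 + w) ^ (p / 2) ≤ (1 + z) ^ p := by
      calc (1 + w) ^ (p / 2) ≤ ((1 + z) ^ 2) ^ (p / 2) :=
            rpow_le_rpow hw (by nlinarith [le_abs_self w]) (by positivity)
        _ = (1 + z) ^ p := by
          rw [rpow_div_two_eq_sqrt _ (by positivity), sqrt_sq (by linarith)]
    have hlin : -(p / 2 * z) - p / 2 * z ^ 2 ≤ p / 2 * w := by
      nlinarith [neg_abs_le w]
    have := one_add_rpow_add_half_mul_le (p := p) (by linarith) hu hz huz
    nlinarith [sq_nonneg z]

noncomputable def smoothPow (t p s : ℝ) : ℝ := (t ^ 2 + s ^ 2) ^ (p / 2)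

lemma smoothPow_nonneg (t p s : ℝ) : 0 ≤ smoothPow t p s := by
  unfold smoothPow; positivity

lemma continuous_smoothPow {p : ℝ} (hp : 0 ≤ p) (t : ℝ) : Continuous (smoothPow t p) :=
  (continuous_const.add (continuous_pow 2)).rpow_const fun _ => Or.inr (by positivity)

lemma smoothPow_zero {t : ℝ} (ht : 0 ≤ t) (p : ℝ) : smoothPow t p 0 = t ^ p := by
  rw [smoothPow, zero_pow two_ne_zero, add_zero, rpow_div_two_eq_sqrt _ (sq_nonneg t),
    sqrt_sq ht]

lemma abs_rpow_le_smoothPow {p : ℝ} (hp : 0 ≤ p) (t s : ℝ) : |s| ^ p ≤ smoothPow t p s := by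
  rw [smoothPow, ← sqrt_sq_eq_abs, ← rpow_div_two_eq_sqrt _ (sq_nonneg s)]
  gcongr
  nlinarith

lemma smoothPow_le {p t : ℝ} (hp : 0 ≤ p) (ht : 0 ≤ t) (s : ℝ) :
    smoothPow t p s ≤ (t + |s|) ^ p := by
  rw [smoothPow, rpow_div_two_eq_sqrt _ (by positivity)]
  gcongr
  rw [sqrt_le_left (by positivity)]
  nlinarith [abs_nonneg s, sq_abs s]

noncomputable def rosenthalIncrement (p t a b : ℝ) : ℝ :=
  2 * p ^ 2 * √p * a / t ^ 2 + (12 * (p / log p)) ^ p * b / t ^ p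

lemma rosenthalIncrement_nonneg {p t a b : ℝ} (hp : 1 ≤ p) (ht : 0 ≤ t) (ha : 0 ≤ a)
    (hb : 0 ≤ b) :
    0 ≤ rosenthalIncrement p t a b := by
  have : 0 ≤ (12 * (p / log p)) ^ p :=
    rpow_nonneg (mul_nonneg (by norm_num) (div_nonneg (by linarith) (log_nonneg hp))) p
  unfold rosenthalIncrement; positivity

lemma sum_rosenthalIncrement {ι : Type*} (s : Finset ι) (p t : ℝ) (a b : ι → ℝ) :
    ∑ i ∈ s, rosenthalIncrement p t (a i) (b i) =
      rosenthalIncrement p t (∑ i ∈ s, a i) (∑ i ∈ s, b i) := by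
  simp only [rosenthalIncrement, Finset.sum_add_distrib, ← Finset.sum_div, ← Finset.mul_sum]

lemma rosenthalIncrement_le {p t a b : ℝ} (hp : 2 ≤ p) (ht : 0 < t)
    (ha : a ≤ (t / (16 * (p / log p))) ^ 2) (hb : b ≤ (t / (16 * (p / log p))) ^ p) :
    rosenthalIncrement p t a b ≤ p := by
  have hp₀ : 0 < p := by linarith
  have hlog : 0 < log p := log_pos (by linarith)
  have hlog_sq : log p ^ 2 ≤ 16 * √p := by
    have h := log_le_rpow_div hp₀.le (by norm_num : (0 : ℝ) < 1 / 4)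
    calc log p ^ 2 ≤ (p ^ (1 / 4 : ℝ) / (1 / 4)) ^ 2 := by gcongr
      _ = 16 * √p := by
        rw [div_pow, ← rpow_natCast, ← rpow_mul hp₀.le, sqrt_eq_rpow]; norm_num; ring
  have hsqrt : √p * √p = p := mul_self_sqrt hp₀.le
  have hquad : 2 * p ^ 2 * √p * a / t ^ 2 ≤ p / 2 := by
    rw [div_le_iff₀ (by positivity)]
    calc 2 * p ^ 2 * √p * a ≤ 2 * p ^ 2 * √p * (t / (16 * (p / log p))) ^ 2 := by gcongr
      _ = √p * log p ^ 2 / 128 * t ^ 2 := by field_simp; ring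
      _ ≤ p / 2 * t ^ 2 := by
        refine mul_le_mul_of_nonneg_right ?_ (sq_nonneg t)
        nlinarith [sqrt_nonneg p]
  have hpow : (12 * (p / log p)) ^ p * b / t ^ p ≤ 1 := by
    rw [div_le_one (by positivity)]
    calc (12 * (p / log p)) ^ p * b
        ≤ (12 * (p / log p)) ^ p * (t / (16 * (p / log p))) ^ p := by gcongr
      _ = (3 / 4 * t) ^ p := by
          rw [← mul_rpow (by positivity) (by positivity)]; congr 1; field_simp; ring
      _ ≤ t ^ p := by gcongr; linarith
  rw [rosenthalIncrement]
  linarith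

lemma abs_div_sq_add_sq_le {t : ℝ} (ht : 0 < t) (s : ℝ) :
    |s / (t ^ 2 + s ^ 2)| ≤ 1 / (2 * t) := by
  rw [abs_div, abs_of_pos (by positivity : 0 < t ^ 2 + s ^ 2),
    div_le_div_iff₀ (by positivity) (by positivity)]
  nlinarith [sq_nonneg (|s| - t), sq_abs s]

lemma abs_two_mul_mul_add_sq_div_le {t : ℝ} (ht : 0 < t) (r x : ℝ) :
    |(2 * r * x + x ^ 2) / (t ^ 2 + r ^ 2)| ≤ |x| / t + (|x| / t) ^ 2 := by
  have hD : 0 < t ^ 2 + r ^ 2 := by positivity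
  have hamgm : 2 * |r| * t ≤ t ^ 2 + r ^ 2 := by nlinarith [sq_nonneg (|r| - t), sq_abs r]
  have h₁ : 2 * |r| * |x| / (t ^ 2 + r ^ 2) ≤ |x| / t := by
    rw [div_le_div_iff₀ hD ht]; nlinarith [abs_nonneg x]
  have h₂ : x ^ 2 / (t ^ 2 + r ^ 2) ≤ (|x| / t) ^ 2 := by
    rw [div_pow, sq_abs]
    exact div_le_div_of_nonneg_left (sq_nonneg x) (by positivity) (by nlinarith [sq_nonneg r])
  rw [abs_div, abs_of_pos hD]
  calc |2 * r * x + x ^ 2| / (t ^ 2 + r ^ 2)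
      ≤ (2 * |r| * |x| + x ^ 2) / (t ^ 2 + r ^ 2) := by
        gcongr
        calc |2 * r * x + x ^ 2| ≤ |2 * r * x| + |x ^ 2| := abs_add_le _ _
          _ = 2 * |r| * |x| + x ^ 2 := by simp [abs_mul]
    _ = 2 * |r| * |x| / (t ^ 2 + r ^ 2) + x ^ 2 / (t ^ 2 + r ^ 2) := add_div _ _ _
    _ ≤ |x| / t + (|x| / t) ^ 2 := add_le_add h₁ h₂

lemma smoothPow_add_le {p t : ℝ} (hp : 2 ≤ p) (ht : 0 < t) (r x : ℝ) :
    smoothPow t p (r + x) ≤ smoothPow t p r + smoothPow t p r * (p * r / (t ^ 2 + r ^ 2)) * x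
      + smoothPow t p r * rosenthalIncrement p t (x ^ 2) (|x| ^ p) := by
  set D := t ^ 2 + r ^ 2 with hD_def
  have hD : 0 < D := by positivity
  set w := (2 * r * x + x ^ 2) / D with hw_def
  have hfactor : t ^ 2 + (r + x) ^ 2 = D * (1 + w) := by
    rw [hw_def, hD_def]; field_simp; ring
  have hw : 0 ≤ 1 + w := by
    have : 0 ≤ D * (1 + w) := by rw [← hfactor]; positivity
    exact nonneg_of_mul_nonneg_right this hD
  have hscalar :=
    one_add_rpow_half_le hp (by positivity) hw (abs_two_mul_mul_add_sq_div_le ht r x)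
  have hquad : p / 2 * (x ^ 2 / D) ≤ p ^ 2 * √p * (x ^ 2 / t ^ 2) := by
    gcongr
    · exact half_le_sq_mul_sqrt hp
    · nlinarith [sq_nonneg r]
  have hexpand : p / 2 * w = p * r / D * x + p / 2 * (x ^ 2 / D) := by
    rw [hw_def]; field_simp
  rw [div_pow, sq_abs, div_rpow (abs_nonneg x) ht.le, hexpand] at hscalar
  have hbracket :
      (1 + w) ^ (p / 2) ≤ 1 + p * r / D * x + rosenthalIncrement p t (x ^ 2) (|x| ^ p) := by
    have : rosenthalIncrement p t (x ^ 2) (|x| ^ p) = 2 * (p ^ 2 * √p * (x ^ 2 / t ^ 2))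
        + (12 * (p / log p)) ^ p * (|x| ^ p / t ^ p) := by rw [rosenthalIncrement]; ring
    linarith
  rw [smoothPow, hfactor, mul_rpow hD.le hw, ← smoothPow]
  calc smoothPow t p r * (1 + w) ^ (p / 2)
      ≤ smoothPow t p r * (1 + p * r / D * x + rosenthalIncrement p t (x ^ 2) (|x| ^ p)) :=
        mul_le_mul_of_nonneg_left hbracket (smoothPow_nonneg t p r)
    _ = _ := by ring

section Probability

variable {Ω : Type*} [MeasurableSpace Ω] {μ : Measure Ω} {p t : ℝ}

lemma memLp_ofReal_iff_integrable_abs_rpow (hp : 0 < p) {X : Ω → ℝ}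
    (hX : AEStronglyMeasurable X μ) :
    MemLp X (ENNReal.ofReal p) μ ↔ Integrable (fun ω => |X ω| ^ p) μ := by
  rw [← integrable_norm_rpow_iff hX (by simpa using hp) ENNReal.ofReal_ne_top,
    ENNReal.toReal_ofReal hp.le]
  rfl

lemma integral_rosenthalIncrement {X : Ω → ℝ} (hX2 : Integrable (fun ω => X ω ^ 2) μ)
    (hXp : Integrable (fun ω => |X ω| ^ p) μ) :
    ∫ ω, rosenthalIncrement p t (X ω ^ 2) (|X ω| ^ p) ∂μ =
      rosenthalIncrement p t (∫ ω, X ω ^ 2 ∂μ) (∫ ω, |X ω| ^ p ∂μ) := by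
  simp only [rosenthalIncrement]
  rw [integral_add ((hX2.const_mul _).div_const _) ((hXp.const_mul _).div_const _),
    integral_div, integral_div, integral_const_mul, integral_const_mul]

variable [IsFiniteMeasure μ]

lemma MeasureTheory.MemLp.integrable_smoothPow (hp : 0 < p) (ht : 0 ≤ t) {S : Ω → ℝ}
    (hS : MemLp S (ENNReal.ofReal p) μ) : Integrable (fun ω => smoothPow t p (S ω)) μ := by
  have hdom : Integrable (fun ω => |(t + |S ω|)| ^ p) μ :=
    (memLp_ofReal_iff_integrable_abs_rpow hp (aestronglyMeasurable_const.add hS.1.norm)).1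
      ((memLp_const t).add hS.norm)
  refine hdom.mono' ((continuous_smoothPow hp.le t).comp_aestronglyMeasurable hS.1) ?_
  filter_upwards with ω
  rw [norm_of_nonneg (smoothPow_nonneg t p _), abs_of_nonneg (by positivity)]
  exact smoothPow_le hp.le ht (S ω)

lemma MeasureTheory.MemLp.integrable_smoothPow_mul_div (hp : 0 < p) (ht : 0 < t)
    {S : Ω → ℝ} (hS : MemLp S (ENNReal.ofReal p) μ) :
    Integrable (fun ω => smoothPow t p (S ω) * (p * S ω / (t ^ 2 + S ω ^ 2))) μ := by
  have hκ : Measurable fun s => smoothPow t p s * (p * s / (t ^ 2 + s ^ 2)) :=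
    (continuous_smoothPow hp.le t).measurable.mul (by fun_prop)
  refine ((hS.integrable_smoothPow hp ht.le).const_mul (p / (2 * t))).mono'
    (hκ.comp_aemeasurable hS.1.aemeasurable).aestronglyMeasurable ?_
  filter_upwards with ω
  have hφ := smoothPow_nonneg t p (S ω)
  have hratio := abs_div_sq_add_sq_le ht (S ω)
  rw [norm_eq_abs, abs_mul, abs_of_nonneg hφ, mul_div_assoc, abs_mul, abs_of_pos hp]
  calc smoothPow t p (S ω) * (p * |S ω / (t ^ 2 + S ω ^ 2)|)
      ≤ smoothPow t p (S ω) * (p * (1 / (2 * t))) := by gcongr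
    _ = p / (2 * t) * smoothPow t p (S ω) := by ring

lemma integral_smoothPow_add_le (hp : 2 ≤ p) (ht : 0 < t) {S X : Ω → ℝ}
    (hS : MemLp S (ENNReal.ofReal p) μ) (hX : MemLp X (ENNReal.ofReal p) μ)
    (hSX : IndepFun S X μ) (hX₀ : ∫ ω, X ω ∂μ = 0) :
    ∫ ω, smoothPow t p (S ω + X ω) ∂μ ≤
      (∫ ω, smoothPow t p (S ω) ∂μ) *
        (1 + rosenthalIncrement p t (∫ ω, X ω ^ 2 ∂μ) (∫ ω, |X ω| ^ p ∂μ)) := by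
  have hp₀ : 0 < p := by linarith
  set φ := smoothPow t p
  set κ : ℝ → ℝ := fun s => φ s * (p * s / (t ^ 2 + s ^ 2))
  set ρ : ℝ → ℝ := fun x => rosenthalIncrement p t (x ^ 2) (|x| ^ p)
  have hφ_meas : Measurable φ := (continuous_smoothPow hp₀.le t).measurable
  have hκ_meas : Measurable κ := by fun_prop
  have hρ_meas : Measurable ρ := by simp only [ρ, rosenthalIncrement]; fun_prop
  have iX : Integrable X μ :=
    hX.integrable (by simpa using ENNReal.ofReal_le_ofReal (by linarith : (1 : ℝ) ≤ p))
  have iX2 : Integrable (fun ω => X ω ^ 2) μ :=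
    (hX.mono_exponent (by simpa using ENNReal.ofReal_le_ofReal hp)).integrable_sq
  have iXp : Integrable (fun ω => |X ω| ^ p) μ :=
    (memLp_ofReal_iff_integrable_abs_rpow hp₀ hX.1).1 hX
  have iφS : Integrable (fun ω => φ (S ω)) μ := hS.integrable_smoothPow hp₀ ht.le
  have iκS : Integrable (fun ω => κ (S ω)) μ := hS.integrable_smoothPow_mul_div hp₀ ht
  have iρX : Integrable (fun ω => ρ (X ω)) μ :=
    ((iX2.const_mul _).div_const _).add ((iXp.const_mul _).div_const _)
  have hκX : IndepFun (fun ω => κ (S ω)) X μ := hSX.comp hκ_meas measurable_id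
  have hφρ : IndepFun (fun ω => φ (S ω)) (fun ω => ρ (X ω)) μ := hSX.comp hφ_meas hρ_meas
  have iκX : Integrable (fun ω => κ (S ω) * X ω) μ := hκX.integrable_mul iκS iX
  have iφρ : Integrable (fun ω => φ (S ω) * ρ (X ω)) μ := hφρ.integrable_mul iφS iρX
  calc ∫ ω, φ (S ω + X ω) ∂μ
      ≤ ∫ ω, (φ (S ω) + κ (S ω) * X ω + φ (S ω) * ρ (X ω)) ∂μ :=
        integral_mono ((hS.add hX).integrable_smoothPow hp₀ ht.le) ((iφS.add iκX).add iφρ)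
          fun ω => smoothPow_add_le hp ht (S ω) (X ω)
    _ = (∫ ω, φ (S ω) ∂μ) + (∫ ω, κ (S ω) ∂μ) * (∫ ω, X ω ∂μ)
          + (∫ ω, φ (S ω) ∂μ) * ∫ ω, ρ (X ω) ∂μ := by
        rw [integral_add (f := fun ω => φ (S ω) + κ (S ω) * X ω) (iφS.add iκX) iφρ,
          integral_add iφS iκX,
          hκX.integral_fun_mul_eq_mul_integral iκS.1 iX.1,
          hφρ.integral_fun_mul_eq_mul_integral iφS.1 iρX.1]
    _ = _ := by rw [hX₀, integral_rosenthalIncrement iX2 iXp]; ring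

lemma integral_smoothPow_sum_le [IsProbabilityMeasure μ] {ι : Type*} (hp : 2 ≤ p)
    (ht : 0 < t) {ξ : ι → Ω → ℝ} (hξ : ∀ i, MemLp (ξ i) (ENNReal.ofReal p) μ)
    (hind : iIndepFun ξ μ) (hmean : ∀ i, ∫ ω, ξ i ω ∂μ = 0) (s : Finset ι) :
    ∫ ω, smoothPow t p (∑ i ∈ s, ξ i ω) ∂μ ≤
      t ^ p * ∏ i ∈ s, (1 + rosenthalIncrement p t (∫ ω, ξ i ω ^ 2 ∂μ) (∫ ω, |ξ i ω| ^ p ∂μ)) := by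
  classical
  induction s using Finset.induction_on with
  | empty => simp [smoothPow_zero ht.le]
  | insert i s hi ih =>
    have hS : MemLp (fun ω => ∑ j ∈ s, ξ j ω) (ENNReal.ofReal p) μ :=
      memLp_finsetSum s fun j _ => hξ j
    have hSX : IndepFun (fun ω => ∑ j ∈ s, ξ j ω) (ξ i) μ := by
      convert hind.indepFun_finsetSum_of_notMem₀ (fun j => (hξ j).1.aemeasurable) hi using 1
      ext ω
      exact (Finset.sum_apply ω s ξ).symm
    have hincr : 0 ≤ rosenthalIncrement p t (∫ ω, ξ i ω ^ 2 ∂μ) (∫ ω, |ξ i ω| ^ p ∂μ) :=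
      rosenthalIncrement_nonneg (by linarith) ht.le (integral_nonneg fun ω => sq_nonneg _)
        (integral_nonneg fun ω => by positivity)
    simp_rw [Finset.sum_insert hi, Finset.prod_insert hi, add_comm (ξ i _)]
    calc ∫ ω, smoothPow t p (∑ j ∈ s, ξ j ω + ξ i ω) ∂μ
        ≤ (∫ ω, smoothPow t p (∑ j ∈ s, ξ j ω) ∂μ) *
            (1 + rosenthalIncrement p t (∫ ω, ξ i ω ^ 2 ∂μ) (∫ ω, |ξ i ω| ^ p ∂μ)) :=
          integral_smoothPow_add_le hp ht hS (hξ i) hSX (hmean i)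
      _ ≤ _ := by
        rw [mul_comm _ (∏ j ∈ s, _), ← mul_assoc]
        gcongr

lemma integral_abs_sum_rpow_le [IsProbabilityMeasure μ] {ι : Type*} [Fintype ι] (hp : 2 ≤ p)
    (ht : 0 < t) {ξ : ι → Ω → ℝ} (hξ : ∀ i, MemLp (ξ i) (ENNReal.ofReal p) μ)
    (hind : iIndepFun ξ μ) (hmean : ∀ i, ∫ ω, ξ i ω ∂μ = 0)
    (hvar : ∑ i, ∫ ω, ξ i ω ^ 2 ∂μ ≤ (t / (16 * (p / log p))) ^ 2)
    (hmom : ∑ i, ∫ ω, |ξ i ω| ^ p ∂μ ≤ (t / (16 * (p / log p))) ^ p) :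
    ∫ ω, |∑ i, ξ i ω| ^ p ∂μ ≤ (exp 1 * t) ^ p := by
  have hp₀ : 0 < p := by linarith
  have hS : MemLp (fun ω => ∑ i, ξ i ω) (ENNReal.ofReal p) μ :=
    memLp_finsetSum _ fun i _ => hξ i
  have hincr : ∀ i, 0 ≤ rosenthalIncrement p t (∫ ω, ξ i ω ^ 2 ∂μ) (∫ ω, |ξ i ω| ^ p ∂μ) :=
    fun i => rosenthalIncrement_nonneg (by linarith) ht.le
      (integral_nonneg fun ω => sq_nonneg _) (integral_nonneg fun ω => by positivity)
  calc ∫ ω, |∑ i, ξ i ω| ^ p ∂μ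
      ≤ ∫ ω, smoothPow t p (∑ i, ξ i ω) ∂μ :=
        integral_mono ((memLp_ofReal_iff_integrable_abs_rpow hp₀ hS.1).1 hS)
          (hS.integrable_smoothPow hp₀ ht.le) fun ω => abs_rpow_le_smoothPow hp₀.le t _
    _ ≤ t ^ p * ∏ i, (1 + rosenthalIncrement p t (∫ ω, ξ i ω ^ 2 ∂μ) (∫ ω, |ξ i ω| ^ p ∂μ)) :=
        integral_smoothPow_sum_le hp ht hξ hind hmean _
    _ ≤ t ^ p * exp (∑ i, rosenthalIncrement p t (∫ ω, ξ i ω ^ 2 ∂μ) (∫ ω, |ξ i ω| ^ p ∂μ)) := by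
        gcongr
        exact prod_one_add_le_exp_sum _ hincr
    _ ≤ t ^ p * exp p := by
        rw [sum_rosenthalIncrement]
        gcongr
        exact rosenthalIncrement_le hp ht hvar hmom
    _ = (exp 1 * t) ^ p := by rw [mul_rpow (exp_pos 1).le ht.le, exp_one_rpow, mul_comm]

lemma rpow_integral_abs_sum_le [IsProbabilityMeasure μ] {ι : Type*} [Fintype ι] (hp : 2 ≤ p)
    (ht : 0 < t) {ξ : ι → Ω → ℝ} (hξ : ∀ i, MemLp (ξ i) (ENNReal.ofReal p) μ)
    (hind : iIndepFun ξ μ) (hmean : ∀ i, ∫ ω, ξ i ω ∂μ = 0)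
    (hM : max ((∑ i, ∫ ω, ξ i ω ^ 2 ∂μ) ^ (1 / (2 : ℝ)))
        ((∑ i, ∫ ω, |ξ i ω| ^ p ∂μ) ^ (1 / p)) ≤ t / (16 * (p / log p))) :
    (∫ ω, |∑ i, ξ i ω| ^ p ∂μ) ^ (1 / p) ≤ exp 1 * t := by
  have hp₀ : 0 < p := by linarith
  have hs : 0 ≤ t / (16 * (p / log p)) := (le_max_of_le_left (by positivity)).trans hM
  have hvar := (le_max_left _ _).trans hM
  have hmom := (le_max_right _ _).trans hM
  rw [one_div, rpow_inv_le_iff_of_pos (by positivity) hs two_pos, rpow_two] at hvar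
  rw [one_div, rpow_inv_le_iff_of_pos (by positivity) hs hp₀] at hmom
  calc (∫ ω, |∑ i, ξ i ω| ^ p ∂μ) ^ (1 / p) ≤ ((exp 1 * t) ^ p) ^ (1 / p) :=
        rpow_le_rpow (integral_nonneg fun ω => by positivity)
          (integral_abs_sum_rpow_le hp ht hξ hind hmean hvar hmom) (by positivity)
    _ = exp 1 * t := by rw [← rpow_mul (by positivity), mul_one_div_cancel hp₀.ne', rpow_one]

end Probability

/-- Rosenthal's inequality with the sharp constant order p/ln p,
Johnson–Schechtman–Zinn: there is an absolute constant C such that for any finite family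
of independent centered random variables ξ₁, …, ξ_n with E|ξ_i|^p < ∞, p ≥ 2,
|Σξ_i|_p ≤ C (p/ln p) max( (Σ Eξ_i²)^{1/2}, (Σ E|ξ_i|^p)^{1/p} ). -/
theorem stmt19 :
    ∃ C : ℝ, 0 < C ∧
      ∀ (Ω : Type) (_ : MeasurableSpace Ω) (μ : Measure Ω), IsProbabilityMeasure μ →
      ∀ (n : ℕ) (ξ : Fin n → Ω → ℝ),
      (∀ i, Measurable (ξ i)) →
      iIndepFun ξ μ →
      (∀ i, ∫ ω, ξ i ω ∂μ = 0) →
      ∀ p : ℝ, 2 ≤ p →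
      (∀ i, Integrable (fun ω => |ξ i ω| ^ p) μ) →
      (∫ ω, |∑ i, ξ i ω| ^ p ∂μ) ^ (1/p) ≤
        C * (p / Real.log p) *
          max ((∑ i, ∫ ω, (ξ i ω) ^ 2 ∂μ) ^ (1/(2:ℝ)))
              ((∑ i, ∫ ω, |ξ i ω| ^ p ∂μ) ^ (1/p)) := by
  refine ⟨16 * exp 1, by positivity, ?_⟩
  intro Ω _ μ _ n ξ hmeas hind hmean p hp hint
  have hu : 0 < 16 * (p / log p) := by
    have := one_le_div_log (by linarith : (1 : ℝ) < p); positivity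
  have hξ : ∀ i, MemLp (ξ i) (ENNReal.ofReal p) μ := fun i =>
    (memLp_ofReal_iff_integrable_abs_rpow (by linarith) (hmeas i).aestronglyMeasurable).2 (hint i)
  set M := max ((∑ i, ∫ ω, ξ i ω ^ 2 ∂μ) ^ (1 / (2 : ℝ)))
    ((∑ i, ∫ ω, |ξ i ω| ^ p ∂μ) ^ (1 / p))
  have hM : 0 ≤ M := le_max_of_le_right (by positivity)
  rw [show 16 * exp 1 * (p / log p) * M = exp 1 * (16 * (p / log p) * M) by ring]
  -- approach `t = 16 (p/log p) M` from above: the bound needs `t > 0`, and `M` may vanish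
  refine le_of_forall_gt_imp_ge_of_dense fun y hy => ?_
  have hMy : M ≤ y / exp 1 / (16 * (p / log p)) := by
    rw [le_div_iff₀ hu, le_div_iff₀ (exp_pos 1)]; linarith [mul_comm M (16 * (p / log p))]
  have hy₀ : 0 < y / exp 1 :=
    div_pos ((mul_nonneg (exp_pos 1).le (by positivity)).trans_lt hy) (exp_pos 1)
  simpa only [mul_div_cancel₀ _ (exp_pos 1).ne'] using
    rpow_integral_abs_sum_le hp hy₀ hξ hind hmean hMy
end
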